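/- arXiv:1401.1267 — 6 statements merged into one kernel-verified Lean document; each statement's English description precedes it below -/
import Mathlib

section
/- The moment generating function of the hyperbolic-secant distribution is sec(t): for every real t with |t| < π/2, ∫_{-∞}^{∞} e^{ty}/(e^{πy/2} + e^{-πy/2}) dy = 1/cos(t). -/
/-!
Substituting `x = sigmoid (π y)` turns the integral into `π⁻¹` times the Beta integral
`B(s, 1 - s)` with `s = t / π + 1 / 2`, and Euler's reflection formula
`Γ(s) Γ(1 - s) = π / sin (π s)` evaluates it to `1 / sin (π s) = 1 / cos t`.
-/

open Real MeasureTheory Set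

lemma integral_Ioo_rpow_mul_one_sub_rpow {a b : ℝ} (ha : 0 < a) (hb : 0 < b) :
    ∫ x in Ioo 0 1, x ^ (a - 1) * (1 - x) ^ (b - 1) = ProbabilityTheory.beta a b := by
  rw [ProbabilityTheory.beta_eq_betaIntegralReal a b ha hb, Complex.betaIntegral,
    intervalIntegral.integral_of_le zero_le_one, ← integral_Ioc_eq_integral_Ioo,
    ← RCLike.re_to_complex, ← integral_re]
  · refine setIntegral_congr_fun measurableSet_Ioc fun x ⟨hx0, hx1⟩ ↦ ?_
    norm_cast
    rw [← Complex.ofReal_cpow hx0.le, ← Complex.ofReal_cpow (by linarith),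
      RCLike.re_to_complex, Complex.re_mul_ofReal, Complex.ofReal_re]
  · rw [← IntegrableOn, ← intervalIntegrable_iff_integrableOn_Ioc_of_le zero_le_one]
    exact Complex.betaIntegral_convergent (by simpa) (by simpa)

lemma beta_one_sub (s : ℝ) : ProbabilityTheory.beta s (1 - s) = π / Real.sin (π * s) := by
  rw [ProbabilityTheory.beta, Real.Gamma_mul_Gamma_one_sub, add_sub_cancel, Real.Gamma_one,
    div_one]

lemma integral_Ioo_eq_integral_comp_sigmoid {E : Type*} [NormedAddCommGroup E] [NormedSpace ℝ E]
    (g : ℝ → E) :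
    ∫ x in Ioo 0 1, g x = ∫ u, (sigmoid u * (1 - sigmoid u)) • g (sigmoid u) := by
  have h := integral_image_eq_integral_abs_deriv_smul MeasurableSet.univ
    (fun u _ ↦ (hasDerivAt_sigmoid u).hasDerivWithinAt) sigmoid_injective.injOn g
  rw [image_univ, range_sigmoid, setIntegral_univ] at h
  rw [h]
  congr with u
  rw [abs_of_pos (mul_pos (sigmoid_pos u) (sub_pos.2 (sigmoid_lt_one u)))]

lemma sigmoid_eq_exp_div (u : ℝ) :
    sigmoid u = exp (u / 2) / (exp (u / 2) + exp (-(u / 2))) := by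
  have h : exp (-(u / 2)) = exp (u / 2) * exp (-u) := by rw [← exp_add]; ring_nf
  rw [sigmoid_def, h, ← mul_one_add, div_mul_cancel_left₀ (exp_pos _).ne']

lemma sigmoid_rpow_mul_sigmoid_neg_rpow (s u : ℝ) :
    sigmoid u ^ s * sigmoid (-u) ^ (1 - s) =
      exp ((s - 1 / 2) * u) / (exp (u / 2) + exp (-(u / 2))) := by
  set c := exp (u / 2) + exp (-(u / 2))
  have hc : 0 < c := by positivity
  have hσ_neg : sigmoid (-u) = exp (-(u / 2)) / c := by
    rw [sigmoid_eq_exp_div, neg_div, neg_neg, add_comm]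
  rw [sigmoid_eq_exp_div, hσ_neg, div_rpow (exp_pos _).le hc.le,
    div_rpow (exp_pos _).le hc.le, ← exp_mul, ← exp_mul, div_mul_div_comm, ← exp_add,
    ← rpow_add hc, add_sub_cancel, rpow_one]
  ring_nf

theorem integral_exp_mul_div_exp_add_exp {s : ℝ} (hs₀ : 0 < s) (hs₁ : s < 1) :
    ∫ u, exp ((s - 1 / 2) * u) / (exp (u / 2) + exp (-(u / 2))) = π / sin (π * s) := by
  have hx : ∀ x ∈ Ioo (0 : ℝ) 1,
      x * (1 - x) * (x ^ (s - 1) * (1 - x) ^ (1 - s - 1)) = x ^ s * (1 - x) ^ (1 - s) := by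
    rintro x ⟨hx₀, hx₁⟩
    rw [rpow_sub_one hx₀.ne', rpow_sub_one (sub_pos.2 hx₁).ne']
    field_simp
  calc ∫ u, exp ((s - 1 / 2) * u) / (exp (u / 2) + exp (-(u / 2)))
      = ∫ x in Ioo 0 1, x ^ (s - 1) * (1 - x) ^ (1 - s - 1) := by
        rw [integral_Ioo_eq_integral_comp_sigmoid]
        congr with u
        rw [smul_eq_mul, hx _ ⟨sigmoid_pos u, sigmoid_lt_one u⟩, ← sigmoid_neg,
          sigmoid_rpow_mul_sigmoid_neg_rpow]
    _ = ProbabilityTheory.beta s (1 - s) :=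
        integral_Ioo_rpow_mul_one_sub_rpow hs₀ (sub_pos.2 hs₁)
    _ = π / sin (π * s) := beta_one_sub s

/-- The moment generating function of the hyperbolic-secant distribution is `sec t`. -/
theorem hs_mgf (t : ℝ) (ht : |t| < π / 2) :
    ∫ y : ℝ, Real.exp (t * y) / (Real.exp (π * y / 2) + Real.exp (-(π * y / 2)))
      = 1 / Real.cos t := by
  obtain ⟨ht₁, ht₂⟩ := abs_lt.mp ht
  obtain ⟨s, hπs⟩ : ∃ s, π * s = t + π / 2 := ⟨(t + π / 2) / π, by field_simp⟩
  have hs₀ : 0 < s := pos_of_mul_pos_right (by linarith) pi_pos.le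
  have hs₁ : s < 1 := lt_of_mul_lt_mul_left (by linarith) pi_pos.le
  set F : ℝ → ℝ := fun u ↦ exp ((s - 1 / 2) * u) / (exp (u / 2) + exp (-(u / 2)))
  calc ∫ y, exp (t * y) / (exp (π * y / 2) + exp (-(π * y / 2)))
      = ∫ y, F (π * y) := by
        congr with y
        congr 2
        linear_combination -y * hπs
    _ = π⁻¹ * (π / cos t) := by
        rw [Measure.integral_comp_mul_left, integral_exp_mul_div_exp_add_exp hs₀ hs₁, hπs,
          sin_add_pi_div_two, abs_of_pos (inv_pos.2 pi_pos), smul_eq_mul]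
    _ = 1 / cos t := by field_simp
end

section
/- If C has the standard Cauchy distribution, then (2/π)·log|C| has the hyperbolic-secant distribution: the pushforward of the measure on ℝ with Lebesgue density x ↦ 1/(π(1+x²)) under the map x ↦ (2/π)·log|x| equals the measure on ℝ with Lebesgue density y ↦ 1/(e^{πy/2} + e^{-πy/2}). -/
/-!
Both sides are finite measures, so it suffices to compare distribution functions. Off the null
set `{0}`, `(2/π) log |x| ≤ a` iff `|x| ≤ t := exp (π a / 2)`, an event of Cauchy probability
`(2/π) arctan t`; and `y ↦ arctan (exp (c y)) / c` is a primitive of `1 / (exp (c y) + exp (-c y))`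
vanishing at `-∞`, so with `c = π/2` the hyperbolic-secant mass of `Iic a` is the same number.
-/

open Real MeasureTheory Set Filter Topology

lemma integrable_one_div_pi_mul_one_add_sq : Integrable fun x : ℝ => 1 / (π * (1 + x ^ 2)) := by
  refine (integrable_inv_one_add_sq.const_mul π⁻¹).congr (ae_of_all _ fun x => ?_)
  simp only [one_div, mul_inv]

lemma integral_Icc_neg_one_div_pi_mul_one_add_sq {t : ℝ} (ht : 0 ≤ t) :
    ∫ x in Icc (-t) t, 1 / (π * (1 + x ^ 2)) = 2 / π * arctan t := by
  simp only [one_div, mul_inv]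
  rw [integral_Icc_eq_integral_Ioc, ← intervalIntegral.integral_of_le (by linarith),
    intervalIntegral.integral_const_mul, integral_inv_one_add_sq, arctan_neg]
  ring

section

variable {c : ℝ}

lemma hasDerivAt_arctan_exp_mul_div (hc : c ≠ 0) (x : ℝ) :
    HasDerivAt (fun y => arctan (exp (c * y)) / c)
      (1 / (exp (c * x) + exp (-(c * x)))) x := by
  refine (((hasDerivAt_const_mul c).exp).arctan.div_const c).congr_deriv ?_
  rw [exp_neg]
  field_simp
  ring

lemma integrableOn_one_div_exp_add_exp_neg_Iic (hc : 0 < c) (a : ℝ) :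
    IntegrableOn (fun y => 1 / (exp (c * y) + exp (-(c * y)))) (Iic a) := by
  refine (integrableOn_exp_mul_Iic hc a).mono'
    (continuous_const.div (by fun_prop) fun y => by positivity).aestronglyMeasurable
    (ae_of_all _ fun y => ?_)
  rw [norm_of_nonneg (by positivity), div_le_iff₀ (by positivity), mul_add, ← exp_add,
    ← exp_add, add_neg_cancel, exp_zero]
  linarith [exp_pos (c * y + c * y)]

lemma integral_Iic_one_div_exp_add_exp_neg (hc : 0 < c) (a : ℝ) :
    ∫ y in Iic a, 1 / (exp (c * y) + exp (-(c * y))) = arctan (exp (c * a)) / c := by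
  have hlim : Tendsto (fun y => arctan (exp (c * y)) / c) atBot (𝓝 0) := by
    simpa using ((continuous_arctan.tendsto 0).comp
      (tendsto_exp_atBot.comp (tendsto_id.const_mul_atBot hc))).div_const c
  rw [integral_Iic_of_hasDerivAt_of_tendsto' (fun x _ => hasDerivAt_arctan_exp_mul_div hc.ne' x)
    (integrableOn_one_div_exp_add_exp_neg_Iic hc a) hlim, sub_zero]

lemma preimage_inv_mul_log_abs_Iic_ae_eq (hc : 0 < c) (a : ℝ) :
    (fun x : ℝ => c⁻¹ * log |x|) ⁻¹' Iic a =ᵐ[volume] Icc (-exp (c * a)) (exp (c * a)) := by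
  have hne : ∀ᵐ x : ℝ, x ≠ 0 := by simp [ae_iff]
  rw [eventuallyEq_set]
  filter_upwards [hne] with x hx
  rw [mem_preimage, mem_Iic, mem_Icc, ← abs_le, inv_mul_le_iff₀ hc,
    log_le_iff_le_exp (abs_pos.2 hx)]

end

/-- The pushforward of the standard Cauchy distribution under `x ↦ (2/π) log |x|`
is the hyperbolic-secant distribution. -/
theorem cauchy_log_abs_hs :
    Measure.map (fun x : ℝ => (2 / π) * Real.log |x|)
        (volume.withDensity fun x : ℝ => ENNReal.ofReal (1 / (π * (1 + x ^ 2))))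
      = volume.withDensity
          fun y : ℝ => ENNReal.ofReal (1 / (Real.exp (π * y / 2) + Real.exp (-(π * y / 2)))) := by
  have hc : 0 < π / 2 := by positivity
  have := isFiniteMeasure_withDensity_ofReal integrable_one_div_pi_mul_one_add_sq.2
  simp only [mul_div_right_comm π _ 2, ← inv_div π 2]
  refine Measure.ext_of_Iic _ _ fun a => ?_
  rw [Measure.map_apply (by fun_prop) measurableSet_Iic,
    measure_congr ((withDensity_absolutelyContinuous _ _).ae_le
      (preimage_inv_mul_log_abs_Iic_ae_eq hc a)),
    withDensity_apply _ measurableSet_Icc, withDensity_apply _ measurableSet_Iic,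
    ← ofReal_integral_eq_lintegral_ofReal integrable_one_div_pi_mul_one_add_sq.integrableOn
      (ae_of_all _ fun x => by positivity),
    ← ofReal_integral_eq_lintegral_ofReal (integrableOn_one_div_exp_add_exp_neg_Iic hc a)
      (ae_of_all _ fun x => by positivity),
    integral_Icc_neg_one_div_pi_mul_one_add_sq (exp_pos _).le,
    integral_Iic_one_div_exp_add_exp_neg hc a]
  congr 1
  ring
end

section
/- The ratio of two independent standard normal random variables is standard Cauchy: the pushforward of the product measure N(0,1) ⊗ N(0,1) on ℝ² under the map (z₁, z₂) ↦ z₁/z₂ equals the measure on ℝ with Lebesgue density x ↦ 1/(π(1+x²)). -/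
open Real MeasureTheory ProbabilityTheory

open scoped ENNReal

/-!
Disintegrating along the denominator `y`, the fibre of `x / y ∈ s` is `y • s`, so the
substitution `x = u y` shows that the ratio has density `u ↦ ∫ |y| φ(u y) φ(y) dy`.
For Gaussian `φ` the integrand is `|y| e^{-(1 + u²) y² / 2} / (2π)`, and
`∫ |y| e^{-b y²} dy = 1 / b` gives `1 / (π (1 + u²))`.
-/

theorem map_div_const_withDensity {f : ℝ → ℝ≥0∞} {y : ℝ} (hy : y ≠ 0) :
    (volume.withDensity f).map (· / y) =
      volume.withDensity fun u ↦ ENNReal.ofReal |y| * f (u * y) := by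
  ext s hs
  have himage : (· * y) '' s = (· / y) ⁻¹' s :=
    (Homeomorph.mulRight₀ y hy).image_eq_preimage_symm s
  rw [Measure.map_apply (measurable_div_const y) hs, withDensity_apply _ hs,
    withDensity_apply _ (measurable_div_const y hs), ← himage]
  exact lintegral_image_eq_lintegral_abs_deriv_mul hs
    (fun x _ ↦ (hasDerivAt_mul_const y).hasDerivWithinAt) (mul_left_injective₀ hy).injOn f

theorem map_div_prod_withDensity {f : ℝ → ℝ≥0∞} (hf : Measurable f) (μ : Measure ℝ) [SFinite μ]
    [NullSingletonClass μ] :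
    ((volume.withDensity f).prod μ).map (fun p ↦ p.1 / p.2) =
      volume.withDensity fun u ↦ ∫⁻ y, ENNReal.ofReal |y| * f (u * y) ∂μ := by
  have hdiv : Measurable fun p : ℝ × ℝ ↦ p.1 / p.2 := measurable_fst.div measurable_snd
  ext s hs
  have hfiber : ∀ᵐ y ∂μ,
      volume.withDensity f ((fun x ↦ (x, y)) ⁻¹' ((fun p ↦ p.1 / p.2) ⁻¹' s)) =
        ∫⁻ u in s, ENNReal.ofReal |y| * f (u * y) := by
    filter_upwards [μ.ae_ne 0] with y hy
    rw [← withDensity_apply _ hs, ← map_div_const_withDensity hy,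
      Measure.map_apply (measurable_div_const y) hs]
    rfl
  rw [Measure.map_apply hdiv hs, Measure.prod_apply_symm (hdiv hs), withDensity_apply _ hs,
    lintegral_congr_ae hfiber, lintegral_lintegral_swap]
  fun_prop

theorem integral_Ioi_mul_exp_neg_mul_sq {b : ℝ} (hb : 0 < b) :
    ∫ x in Set.Ioi (0 : ℝ), x * exp (-b * x ^ 2) = (2 * b)⁻¹ := by
  have h := integral_rpow_mul_exp_neg_mul_rpow two_pos (by norm_num : (-1 : ℝ) < 1) hb
  norm_num [Real.rpow_natCast, Real.rpow_neg_one, mul_comm] at h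
  simpa [mul_comm] using h

theorem integral_abs_mul_exp_neg_mul_sq {b : ℝ} (hb : 0 < b) :
    ∫ x, |x| * exp (-b * x ^ 2) = b⁻¹ := by
  have h := integral_comp_abs (f := fun x ↦ x * exp (-b * x ^ 2))
  simp only [sq_abs] at h
  rw [h, integral_Ioi_mul_exp_neg_mul_sq hb]
  field_simp

theorem integrable_abs_mul_exp_neg_mul_sq {b : ℝ} (hb : 0 < b) :
    Integrable fun x : ℝ ↦ |x| * exp (-b * x ^ 2) := by
  simpa [abs_mul] using (integrable_mul_exp_neg_mul_sq hb).abs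

theorem gaussianPDFReal_mul_gaussianPDFReal_mul (u y : ℝ) :
    gaussianPDFReal 0 1 y * gaussianPDFReal 0 1 (u * y) =
      (2 * π)⁻¹ * exp (-((1 + u ^ 2) / 2) * y ^ 2) := by
  have hsqrt : (√(2 * π))⁻¹ * (√(2 * π))⁻¹ = (2 * π)⁻¹ := by
    rw [← mul_inv, mul_self_sqrt (by positivity)]
  simp only [gaussianPDFReal, NNReal.coe_one, mul_one, sub_zero]
  rw [mul_mul_mul_comm, hsqrt, ← exp_add]
  ring_nf

theorem lintegral_abs_mul_gaussianPDF_mul (u : ℝ) :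
    ∫⁻ y, ENNReal.ofReal |y| * gaussianPDF 0 1 (u * y) ∂gaussianReal 0 1 =
      ENNReal.ofReal (1 / (π * (1 + u ^ 2))) := by
  have hb : 0 < (1 + u ^ 2) / 2 := by positivity
  have hdensity : ∀ y, gaussianPDF 0 1 y * (ENNReal.ofReal |y| * gaussianPDF 0 1 (u * y)) =
      ENNReal.ofReal ((2 * π)⁻¹ * (|y| * exp (-((1 + u ^ 2) / 2) * y ^ 2))) := by
    intro y
    simp only [gaussianPDF, ← ENNReal.ofReal_mul (gaussianPDFReal_nonneg 0 1 _),
      ← ENNReal.ofReal_mul (abs_nonneg y)]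
    congr 1
    rw [mul_left_comm, gaussianPDFReal_mul_gaussianPDFReal_mul]
    ring
  rw [gaussianReal_of_var_ne_zero 0 one_ne_zero,
    lintegral_withDensity_eq_lintegral_mul₀ (measurable_gaussianPDF 0 1).aemeasurable (by fun_prop)]
  simp only [Pi.mul_apply, hdensity]
  rw [← ofReal_integral_eq_lintegral_ofReal ((integrable_abs_mul_exp_neg_mul_sq hb).const_mul _)
    (ae_of_all _ fun y ↦ by positivity), integral_const_mul, integral_abs_mul_exp_neg_mul_sq hb]
  congr 1
  field_simp

/-- The ratio of two independent standard normal random variables is standard Cauchy. -/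
theorem gaussian_ratio_cauchy :
    Measure.map (fun p : ℝ × ℝ => p.1 / p.2) ((gaussianReal 0 1).prod (gaussianReal 0 1))
      = volume.withDensity fun x : ℝ => ENNReal.ofReal (1 / (π * (1 + x ^ 2))) := by
  have := nullSingletonClass_gaussianReal (μ := 0) one_ne_zero
  nth_rewrite 1 [gaussianReal_of_var_ne_zero 0 one_ne_zero]
  simp_rw [map_div_prod_withDensity (measurable_gaussianPDF 0 1),
    lintegral_abs_mul_gaussianPDF_mul]
end

section
/- The log of the absolute value of a scaled standard Cauchy variable is a shifted hyperbolic-secant variable: for any η > 0, the pushforward of the measure on ℝ with Lebesgue density x ↦ (1/π)·η/(η² + x²) (the Cauchy distribution with location 0 and scale η) under the map x ↦ log|x| equals the measure on ℝ with Lebesgue density v ↦ (1/π)·sech(v − log η) = 2/(π(e^{v − log η} + e^{-(v − log η)})). -/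
/-!
Up to the null set `{0}`, the substitutions `x = exp v` and `x = -exp v` on the two half-lines
turn the pushforward of `f(x) dx` under `log |x|` into `e^v (f(-e^v) + f(e^v)) dv`. For the
Cauchy density this is `2η e^v / (π (η² + e^{2v})) = sech(v - log η) / π`.
-/

open Real MeasureTheory Set
open scoped ENNReal

theorem setLIntegral_eq_inter_Iio_add_inter_Ioi {α : Type*} [MeasurableSpace α] [LinearOrder α]
    [TopologicalSpace α] [OrderClosedTopology α] [OpensMeasurableSpace α]
    {μ : Measure α} [NullSingletonClass μ] (f : α → ℝ≥0∞) (A : Set α) (a : α) :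
    ∫⁻ x in A, f x ∂μ = ∫⁻ x in A ∩ Iio a, f x ∂μ + ∫⁻ x in A ∩ Ioi a, f x ∂μ := by
  rw [← lintegral_inter_add_sdiff f A measurableSet_Ioi, sdiff_eq, compl_Ioi, add_comm,
    setLIntegral_congr ((ae_eq_refl A).inter Iio_ae_eq_Iic)]

theorem preimage_log_abs_inter_Ioi (s : Set ℝ) :
    (fun x => log |x|) ⁻¹' s ∩ Ioi 0 = exp '' s := by
  ext x
  constructor
  · rintro ⟨hx, hx0 : 0 < x⟩
    exact ⟨log |x|, hx, by rw [abs_of_pos hx0, exp_log hx0]⟩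
  · rintro ⟨v, hv, rfl⟩
    exact ⟨by simpa [abs_of_pos (exp_pos v)] using hv, exp_pos v⟩

theorem preimage_log_abs_inter_Iio (s : Set ℝ) :
    (fun x => log |x|) ⁻¹' s ∩ Iio 0 = (fun v => -exp v) '' s := by
  ext x
  constructor
  · rintro ⟨hx, hx0 : x < 0⟩
    exact ⟨log |x|, hx, by simp only [abs_of_neg hx0, exp_log (neg_pos.2 hx0), neg_neg]⟩
  · rintro ⟨v, hv, rfl⟩
    exact ⟨by simpa [abs_of_pos (exp_pos v)] using hv, neg_neg_iff_pos.2 (exp_pos v)⟩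

theorem map_log_abs_withDensity {f : ℝ → ℝ≥0∞} (hf : Measurable f) :
    (volume.withDensity f).map (fun x => log |x|) =
      volume.withDensity fun v => ENNReal.ofReal (exp v) * (f (-exp v) + f (exp v)) := by
  have hlog : Measurable fun x : ℝ => log |x| := measurable_log.comp measurable_abs
  ext s hs
  have hexp : ∀ v ∈ s, HasDerivWithinAt exp (exp v) s v :=
    fun v _ => (hasDerivAt_exp v).hasDerivWithinAt
  have hnegexp : ∀ v ∈ s, HasDerivWithinAt (fun v => -exp v) (-exp v) s v :=
    fun v _ => (hasDerivAt_exp v).neg.hasDerivWithinAt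
  rw [Measure.map_apply hlog hs, withDensity_apply _ (hlog hs), withDensity_apply _ hs,
    setLIntegral_eq_inter_Iio_add_inter_Ioi f _ 0,
    preimage_log_abs_inter_Iio, preimage_log_abs_inter_Ioi,
    lintegral_image_eq_lintegral_abs_deriv_mul hs hnegexp (neg_injective.comp exp_injective).injOn,
    lintegral_image_eq_lintegral_abs_deriv_mul hs hexp exp_injective.injOn,
    ← lintegral_add_left (by fun_prop)]
  refine setLIntegral_congr_fun hs fun v _ => ?_
  simp only [abs_neg, abs_of_pos (exp_pos v), mul_add]

theorem exp_mul_cauchy_density_add (η v : ℝ) (hη : 0 < η) :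
    exp v * ((1 / π) * (η / (η ^ 2 + (-exp v) ^ 2)) + (1 / π) * (η / (η ^ 2 + exp v ^ 2))) =
      2 / (π * (exp (v - log η) + exp (-(v - log η)))) := by
  rw [neg_sq, neg_sub, exp_sub, exp_sub, exp_log hη]
  field_simp
  ring

/-- If `C` is Cauchy with location `0` and scale `η`, then `log |C|` has the
hyperbolic-secant density shifted by `log η`. -/
theorem cauchy_scale_log_abs (η : ℝ) (hη : 0 < η) :
    Measure.map (fun x : ℝ => Real.log |x|)
        (volume.withDensity fun x : ℝ => ENNReal.ofReal ((1 / π) * (η / (η ^ 2 + x ^ 2))))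
      = volume.withDensity fun v : ℝ =>
          ENNReal.ofReal
            (2 / (π * (Real.exp (v - Real.log η) + Real.exp (-(v - Real.log η))))) := by
  rw [map_log_abs_withDensity (by fun_prop)]
  congr 1
  funext v
  rw [← exp_mul_cauchy_density_add η v hη, ENNReal.ofReal_mul (exp_pos v).le,
    ENNReal.ofReal_add (by positivity) (by positivity)]
end

section
/- The Jeffreys-prior distribution of the log odds ratio: if Z₁, Z₂, Z₃, Z₄ are independent standard normal random variables, then the law of W = log(Z₁²Z₄²/(Z₂²Z₃²)) = 2log|Z₁/Z₂| + 2log|Z₄/Z₃| is the probability measure on ℝ with Lebesgue density w ↦ w/(π²(e^{w/2} − e^{-w/2})) for w ≠ 0 (extended by its limit 2/π² at w = 0). -/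
open Real MeasureTheory ProbabilityTheory

/-- The density of the log odds ratio under the Jeffreys prior:
`w ↦ w/(π²(e^{w/2} − e^{-w/2}))` for `w ≠ 0`, extended by its limit `2/π²` at `w = 0`. -/
noncomputable def logOddsRatioDensity (w : ℝ) : ℝ :=
  if w = 0 then 2 / π ^ 2
  else w / (π ^ 2 * (Real.exp (w / 2) - Real.exp (-(w / 2))))

/-!
Almost surely `W = (log Z₀² - log Z₁²) + (log Z₃² - log Z₂²)`, a sum of independent copies of
`log Z₀² - log Z₁²`. Substituting `x = ±e^{u/2}`, `log Z²` has density `e^{(u - e^u)/2} / √(2π)`.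
Convolving it with its reflection gives `e^{t/2} / (π (e^t + 1))`, and convolving that with itself
gives the density of `W`. Both convolution integrals have elementary antiderivatives in `e^t`, so
they follow from the fundamental theorem of calculus on the whole line.
-/

open Filter Set Topology
open scoped ENNReal

theorem integrable_of_hasDerivAt_of_nonneg_of_tendsto {f f' : ℝ → ℝ} {m n : ℝ}
    (hderiv : ∀ x, HasDerivAt f (f' x) x) (hf' : ∀ x, 0 ≤ f' x)
    (hbot : Tendsto f atBot (𝓝 m)) (htop : Tendsto f atTop (𝓝 n)) : Integrable f' := by
  have hcont : Continuous f := continuous_iff_continuousAt.2 fun x => (hderiv x).continuousAt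
  have hsub : ∀ x, ∫ y in -x..x, ‖f' y‖ = f x - f (-x) := fun x => by
    simp_rw [Real.norm_of_nonneg (hf' _)]
    exact intervalIntegral.integral_eq_sub_of_hasDerivAt (fun y _ => hderiv y)
      (intervalIntegral.intervalIntegrable_deriv_of_nonneg hcont.continuousOn
        (fun y _ => hderiv y) fun y _ => hf' y)
  refine integrable_of_intervalIntegral_norm_tendsto (n - m) (fun x => ?_)
    tendsto_neg_atTop_atBot tendsto_id ?_
  · exact intervalIntegral.integrableOn_deriv_of_nonneg hcont.continuousOn
      (fun y _ => hderiv y) fun y _ => hf' y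
  · simp only [id, hsub]
    exact htop.sub (hbot.comp tendsto_neg_atTop_atBot)

theorem lintegral_ofReal_eq_of_hasDerivAt_of_tendsto {f f' : ℝ → ℝ} {m n : ℝ}
    (hderiv : ∀ x, HasDerivAt f (f' x) x) (hf' : ∀ x, 0 ≤ f' x)
    (hbot : Tendsto f atBot (𝓝 m)) (htop : Tendsto f atTop (𝓝 n)) :
    ∫⁻ x, ENNReal.ofReal (f' x) = ENNReal.ofReal (n - m) := by
  have hint := integrable_of_hasDerivAt_of_nonneg_of_tendsto hderiv hf' hbot htop
  rw [← ofReal_integral_eq_lintegral_ofReal hint (ae_of_all _ hf'),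
    integral_of_hasDerivAt_of_tendsto hderiv hint hbot htop]

theorem lintegral_exp_mul_exp_neg_mul_exp {b : ℝ} (hb : 0 < b) :
    ∫⁻ t, ENNReal.ofReal (exp t * exp (-(b * exp t))) = ENNReal.ofReal b⁻¹ := by
  have hderiv : ∀ t, HasDerivAt (fun t => -b⁻¹ * exp (-(b * exp t)))
      (exp t * exp (-(b * exp t))) t := fun t => by
    refine ((((hasDerivAt_exp t).const_mul b).neg.exp).const_mul (-b⁻¹)).congr_deriv ?_
    simp only [Pi.neg_apply]
    field_simp
  have hinner : Tendsto (fun t => -(b * exp t)) atBot (𝓝 0) := by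
    simpa using (tendsto_exp_atBot.const_mul b).neg
  have hbot := ((continuous_exp.tendsto 0).comp hinner).const_mul (-b⁻¹)
  have htop := (tendsto_exp_atBot.comp
    (tendsto_neg_atTop_atBot.comp (tendsto_exp_atTop.const_mul_atTop hb))).const_mul (-b⁻¹)
  rw [lintegral_ofReal_eq_of_hasDerivAt_of_tendsto hderiv (fun t => by positivity) hbot htop]
  simp

theorem lintegral_exp_div_exp_add_one_mul_exp_add {c : ℝ} (hc : 0 < c) (hc1 : c ≠ 1) :
    ∫⁻ t, ENNReal.ofReal (exp t / ((exp t + 1) * (exp t + c)))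
      = ENNReal.ofReal (log c / (c - 1)) := by
  have hc1' : c - 1 ≠ 0 := sub_ne_zero.2 hc1
  set F : ℝ → ℝ := fun s => (log (s + 1) - log (s + c)) / (c - 1)
  have hderiv : ∀ t, HasDerivAt (F ∘ exp) (exp t / ((exp t + 1) * (exp t + c))) t := fun t => by
    have he := exp_pos t
    refine (((((hasDerivAt_exp t).add_const 1).log (by positivity)).sub
      (((hasDerivAt_exp t).add_const c).log (by positivity))).div_const (c - 1)).congr_deriv ?_
    field_simp
    ring
  have hbot : Tendsto (F ∘ exp) atBot (𝓝 (F 0)) :=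
    ((ContinuousAt.div_const (((continuousAt_id.add continuousAt_const).log (by simp)).sub
      ((continuousAt_id.add continuousAt_const).log (by simp [hc.ne']))) _).tendsto).comp
      tendsto_exp_atBot
  have htop : Tendsto (F ∘ exp) atTop (𝓝 0) := by
    have h := ((tendsto_log_comp_add_sub_log 1).sub (tendsto_log_comp_add_sub_log c)).div_const
      (c - 1)
    simp only [sub_sub_sub_cancel_right, sub_zero, zero_div] at h
    exact h.comp tendsto_exp_atTop
  rw [lintegral_ofReal_eq_of_hasDerivAt_of_tendsto hderiv (fun t => by positivity) hbot htop]
  simp [F]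
  ring_nf

theorem lintegral_comp_abs (f : ℝ → ℝ≥0∞) : ∫⁻ x, f |x| = 2 * ∫⁻ x in Ioi 0, f x := by
  have hpos : ∫⁻ x in Ioi 0, f |x| = ∫⁻ x in Ioi 0, f x :=
    setLIntegral_congr_fun measurableSet_Ioi fun x hx => by rw [abs_of_pos hx]
  have hneg : ∫⁻ x in Iic 0, f |x| = ∫⁻ x in Ioi 0, f x := by
    rw [setLIntegral_congr Iio_ae_eq_Iic.symm, ← hpos]
    simpa using (Measure.measurePreserving_neg (volume : Measure ℝ)).setLIntegral_comp_preimage_emb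
      measurableEmbedding_neg (fun x => f |x|) (Ioi 0)
  rw [← lintegral_add_compl _ measurableSet_Ioi, compl_Ioi, hneg, hpos, two_mul]

theorem map_log_sq_withDensity_of_even {f : ℝ → ℝ≥0∞} (hf : Measurable f) (hf_even : f.Even) :
    (volume.withDensity f).map (fun x => log (x ^ 2))
      = volume.withDensity fun u => ENNReal.ofReal (exp (u / 2)) * f (exp (u / 2)) := by
  have hmeas : Measurable fun x : ℝ => log (x ^ 2) := by fun_prop
  have hrange : (fun u : ℝ => exp (u / 2)) '' univ = Ioi 0 := by
    rw [image_univ, ← range_exp]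
    exact (Equiv.divRight₀ (2 : ℝ) two_ne_zero).surjective.range_comp exp
  have hinj : InjOn (fun u : ℝ => exp (u / 2)) univ := fun u _ v _ huv => by
    simpa using exp_injective huv
  have hderiv : ∀ u ∈ univ, HasDerivWithinAt (fun u => exp (u / 2)) (exp (u / 2) / 2) univ u :=
    fun u _ => by
      rw [hasDerivWithinAt_univ]
      simpa [div_eq_mul_inv] using ((hasDerivAt_id u).div_const 2).exp
  refine Measure.ext_of_lintegral _ fun φ hφ => ?_
  rw [lintegral_map hφ hmeas,
    lintegral_withDensity_eq_lintegral_mul _ hf (g := fun x => φ (log (x ^ 2))) (hφ.comp hmeas),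
    lintegral_withDensity_eq_lintegral_mul _ (by fun_prop) hφ]
  have habs : ∀ x, (f * fun x => φ (log (x ^ 2))) x = f |x| * φ (log (|x| ^ 2)) := fun x => by
    rcases abs_choice x with h | h <;> simp [h, hf_even x]
  simp_rw [habs]
  rw [lintegral_comp_abs (fun y => f y * φ (log (y ^ 2))), ← hrange,
    lintegral_image_eq_lintegral_abs_deriv_mul MeasurableSet.univ hderiv hinj, setLIntegral_univ,
    ← lintegral_const_mul _ (by fun_prop)]
  congr 1 with u
  have htwo : (2 : ℝ≥0∞) * ENNReal.ofReal (exp (u / 2) / 2) = ENNReal.ofReal (exp (u / 2)) := by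
    rw [← ENNReal.ofReal_ofNat 2, ← ENNReal.ofReal_mul zero_le_two]
    ring_nf
  simp only [abs_of_pos (by positivity : 0 < exp (u / 2) / 2), log_pow, log_exp, Pi.mul_apply]
  rw [← htwo]
  ring_nf

noncomputable def logSqGaussianPDF (u : ℝ) : ℝ := exp ((u - exp u) / 2) / √(2 * π)

theorem logSqGaussianPDF_nonneg (u : ℝ) : 0 ≤ logSqGaussianPDF u := by
  unfold logSqGaussianPDF; positivity

@[fun_prop]
theorem measurable_logSqGaussianPDF : Measurable logSqGaussianPDF := by
  unfold logSqGaussianPDF; fun_prop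

theorem map_log_sq_gaussianReal :
    (gaussianReal 0 1).map (fun x => log (x ^ 2))
      = volume.withDensity fun u => ENNReal.ofReal (logSqGaussianPDF u) := by
  rw [gaussianReal_of_var_ne_zero 0 one_ne_zero,
    map_log_sq_withDensity_of_even (measurable_gaussianPDF 0 1)
      fun x => by simp [gaussianPDF, gaussianPDFReal]]
  congr with u
  rw [gaussianPDF, ← ENNReal.ofReal_mul (by positivity)]
  congr 1
  have hsq : exp (u / 2) ^ 2 = exp u := by rw [← exp_nat_mul]; ring_nf
  simp only [gaussianPDFReal, logSqGaussianPDF, sub_zero, hsq, NNReal.coe_one, mul_one]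
  rw [sub_div, exp_sub, neg_div, exp_neg]
  field_simp

/-- `C² = Z₀²/Z₁²` has density `1/(π √s (1 + s))` for a standard Cauchy variable `C = Z₀/Z₁`;
this is the density of `log C²`. -/
noncomputable def logSqCauchyPDF (t : ℝ) : ℝ := exp (t / 2) / (π * (exp t + 1))

theorem logSqCauchyPDF_nonneg (t : ℝ) : 0 ≤ logSqCauchyPDF t := by
  unfold logSqCauchyPDF; positivity

@[fun_prop]
theorem measurable_logSqCauchyPDF : Measurable logSqCauchyPDF := by
  unfold logSqCauchyPDF; fun_prop

theorem lconvolution_logSqGaussianPDF_neg (x : ℝ) :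
    ((fun u => ENNReal.ofReal (logSqGaussianPDF u)) ⋆ₗ
      fun u => ENNReal.ofReal (logSqGaussianPDF (-u))) x
      = ENNReal.ofReal (logSqCauchyPDF x) := by
  have hb : 0 < (1 + exp (-x)) / 2 := by positivity
  have hfactor : ∀ y, logSqGaussianPDF y * logSqGaussianPDF (-(-y + x))
      = exp (-(x / 2)) / (2 * π) * (exp y * exp (-((1 + exp (-x)) / 2 * exp y))) := fun y => by
    rw [logSqGaussianPDF, logSqGaussianPDF, div_mul_div_comm, mul_self_sqrt (by positivity),
      ← exp_add, ← exp_add, div_mul_eq_mul_div, ← exp_add, neg_add, neg_neg, ← sub_eq_add_neg,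
      exp_sub y x, exp_neg]
    congr 2
    field_simp
    ring
  simp_rw [lconvolution_def, ← ENNReal.ofReal_mul (logSqGaussianPDF_nonneg _), hfactor,
    ENNReal.ofReal_mul (by positivity : 0 ≤ exp (-(x / 2)) / (2 * π))]
  rw [lintegral_const_mul' _ _ ENNReal.ofReal_ne_top, lintegral_exp_mul_exp_neg_mul_exp hb,
    ← ENNReal.ofReal_mul (by positivity)]
  congr 1
  have hexp : exp x = exp (x / 2) ^ 2 := by rw [← exp_nat_mul]; ring_nf
  rw [logSqCauchyPDF, exp_neg, exp_neg, hexp]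
  field_simp

theorem lconvolution_logSqCauchyPDF_self {w : ℝ} (hw : w ≠ 0) :
    ((fun t => ENNReal.ofReal (logSqCauchyPDF t)) ⋆ₗ fun t => ENNReal.ofReal (logSqCauchyPDF t)) w
      = ENNReal.ofReal (w / (π ^ 2 * (exp (w / 2) - exp (-(w / 2))))) := by
  have hfactor : ∀ t, logSqCauchyPDF t * logSqCauchyPDF (-t + w)
      = exp (w / 2) / π ^ 2 * (exp t / ((exp t + 1) * (exp t + exp w))) := fun t => by
    have h1 : exp ((-t + w) / 2) = exp (w / 2) / exp (t / 2) := by rw [← exp_sub]; ring_nf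
    have h2 : exp (-t + w) = exp w / exp t := by rw [← exp_sub]; ring_nf
    have h3 : exp t = exp (t / 2) ^ 2 := by rw [← exp_nat_mul]; ring_nf
    rw [logSqCauchyPDF, logSqCauchyPDF, h1, h2, h3]
    field_simp
    ring
  simp_rw [lconvolution_def, ← ENNReal.ofReal_mul (logSqCauchyPDF_nonneg _), hfactor,
    ENNReal.ofReal_mul (by positivity : 0 ≤ exp (w / 2) / π ^ 2)]
  rw [lintegral_const_mul' _ _ ENNReal.ofReal_ne_top,
    lintegral_exp_div_exp_add_one_mul_exp_add (exp_pos w) (by simpa using hw),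
    ← ENNReal.ofReal_mul (by positivity), log_exp]
  congr 1
  have hexp : exp w = exp (w / 2) ^ 2 := by rw [← exp_nat_mul]; ring_nf
  have hne : exp (w / 2) ^ 2 - 1 ≠ 0 := by rw [← hexp]; simpa [sub_eq_zero] using hw
  rw [exp_neg, hexp]
  field_simp

theorem map_neg_withDensity {G : Type*} [MeasurableSpace G] [InvolutiveNeg G] [MeasurableNeg G]
    {μ : Measure G} [μ.IsNegInvariant] {f : G → ℝ≥0∞} (hf : Measurable f) :
    (μ.withDensity f).map Neg.neg = μ.withDensity fun x => f (-x) := by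
  refine Measure.ext_of_lintegral _ fun φ hφ => ?_
  rw [lintegral_map hφ measurable_neg,
    lintegral_withDensity_eq_lintegral_mul _ hf (g := fun x => φ (-x)) (hφ.comp measurable_neg),
    lintegral_withDensity_eq_lintegral_mul _ (f := fun x => f (-x)) (hf.comp measurable_neg) hφ,
    ← lintegral_neg_eq_self (fun x => (f * fun x => φ (-x)) x)]
  simp only [Pi.mul_apply, neg_neg]

theorem ProbabilityTheory.IndepFun.map_log_sq_sub_log_sq_of_gaussianReal {Ω : Type*}
    [MeasurableSpace Ω] {μ : Measure Ω} [IsProbabilityMeasure μ] {A B : Ω → ℝ}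
    (hA : Measurable A) (hB : Measurable B) (hAB : IndepFun A B μ)
    (hlawA : μ.map A = gaussianReal 0 1) (hlawB : μ.map B = gaussianReal 0 1) :
    μ.map (fun ω => log (A ω ^ 2) - log (B ω ^ 2))
      = volume.withDensity fun t => ENNReal.ofReal (logSqCauchyPDF t) := by
  have hlog : Measurable fun x : ℝ => log (x ^ 2) := by fun_prop
  have hg : Measurable fun u => ENNReal.ofReal (logSqGaussianPDF u) := by fun_prop
  have hlawlogA : μ.map (fun ω => log (A ω ^ 2))
      = volume.withDensity fun u => ENNReal.ofReal (logSqGaussianPDF u) := by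
    rw [← map_log_sq_gaussianReal, ← hlawA, Measure.map_map hlog hA]
    rfl
  have hlawlogB : μ.map (fun ω => -log (B ω ^ 2))
      = volume.withDensity fun u => ENNReal.ofReal (logSqGaussianPDF (-u)) := by
    rw [← map_neg_withDensity hg, ← map_log_sq_gaussianReal, ← hlawB, Measure.map_map hlog hB,
      Measure.map_map measurable_neg (hlog.comp hB)]
    rfl
  have hsum : (fun ω => log (A ω ^ 2) - log (B ω ^ 2))
      = (fun ω => log (A ω ^ 2)) + fun ω => -log (B ω ^ 2) := by
    funext ω; simp [sub_eq_add_neg]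
  have hAB' : IndepFun (fun ω => log (A ω ^ 2)) (fun ω => -log (B ω ^ 2)) μ :=
    hAB.comp hlog (measurable_neg.comp hlog)
  rw [hsum, hAB'.map_add_eq_map_conv_map (by fun_prop) (by fun_prop), hlawlogA, hlawlogB,
    conv_withDensity_eq_lconvolution hg (g := fun u => ENNReal.ofReal (logSqGaussianPDF (-u)))
      (by fun_prop)]
  exact congrArg _ (funext lconvolution_logSqGaussianPDF_neg)

/-- If `Z 0, …, Z 3` are i.i.d. standard normal, then
`W = log(Z₀² Z₃² / (Z₁² Z₂²))` has density `logOddsRatioDensity`. -/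
theorem jeffreys_log_odds_ratio_law
    {Ω : Type*} [MeasureSpace Ω] [IsProbabilityMeasure (ℙ : Measure Ω)]
    (Z : Fin 4 → Ω → ℝ) (hZ : ∀ i, Measurable (Z i))
    (hindep : iIndepFun Z ℙ)
    (hlaw : ∀ i, Measure.map (Z i) ℙ = gaussianReal 0 1) :
    Measure.map
        (fun ω => Real.log ((Z 0 ω) ^ 2 * (Z 3 ω) ^ 2 / ((Z 1 ω) ^ 2 * (Z 2 ω) ^ 2))) ℙ
      = volume.withDensity fun w : ℝ => ENNReal.ofReal (logOddsRatioDensity w) := by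
  have hne : ∀ i, ∀ᵐ ω ∂(ℙ : Measure Ω), Z i ω ≠ 0 := fun i => by
    have := nullSingletonClass_gaussianReal (μ := 0) one_ne_zero
    exact ae_of_ae_map (hZ i).aemeasurable (by rw [hlaw i]; exact Measure.ae_ne _ 0)
  have hsplit : (fun ω => log (Z 0 ω ^ 2 * Z 3 ω ^ 2 / (Z 1 ω ^ 2 * Z 2 ω ^ 2)))
      =ᵐ[ℙ] (fun ω => log (Z 0 ω ^ 2) - log (Z 1 ω ^ 2))
        + fun ω => log (Z 3 ω ^ 2) - log (Z 2 ω ^ 2) := by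
    filter_upwards [hne 0, hne 1, hne 2, hne 3] with ω h0 h1 h2 h3
    rw [Pi.add_apply, log_div (by positivity) (by positivity),
      log_mul (by positivity) (by positivity), log_mul (by positivity) (by positivity)]
    ring
  have hindep' : IndepFun (fun ω => log (Z 0 ω ^ 2) - log (Z 1 ω ^ 2))
      (fun ω => log (Z 3 ω ^ 2) - log (Z 2 ω ^ 2)) ℙ := by
    have hφ : Measurable fun p : ℝ × ℝ => log (p.1 ^ 2) - log (p.2 ^ 2) := by fun_prop
    exact (hindep.indepFun_prodMk_prodMk hZ 0 1 3 2
      (by decide) (by decide) (by decide) (by decide)).comp hφ hφ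
  rw [Measure.map_congr hsplit, hindep'.map_add_eq_map_conv_map (by fun_prop) (by fun_prop),
    (hindep.indepFun (i := 0) (j := 1) (by decide)).map_log_sq_sub_log_sq_of_gaussianReal
      (hZ 0) (hZ 1) (hlaw 0) (hlaw 1),
    (hindep.indepFun (i := 3) (j := 2) (by decide)).map_log_sq_sub_log_sq_of_gaussianReal
      (hZ 3) (hZ 2) (hlaw 3) (hlaw 2),
    conv_withDensity_eq_lconvolution (by fun_prop) (by fun_prop)]
  refine withDensity_congr_ae ?_
  filter_upwards [Measure.ae_ne volume 0] with w hw
  rw [lconvolution_logSqCauchyPDF_self hw, logOddsRatioDensity, if_neg hw]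
end

section
/- The distribution of the log odds ratio under the Jeffreys prior has mean 0 and variance 2π²: for the density f_W(w) = w/(π²(e^{w/2} − e^{-w/2})) (extended by 2/π² at w = 0), one has ∫_{-∞}^{∞} f_W(w) dw = 1, ∫_{-∞}^{∞} w·f_W(w) dw = 0, and ∫_{-∞}^{∞} w²·f_W(w) dw = 2π². -/
/-!
Expanding `1 / (e^{w/2} - e^{-w/2}) = ∑ₙ e^{-(2n+1)w/2}` for `w > 0` and integrating term
by term against `w^m` gives
`∫₀^∞ w^m / (e^{w/2} - e^{-w/2}) dw = m! 2^{m+1} ∑ₙ (2n+1)^{-(m+1)}`.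
The density is even, so its odd moments vanish, and its moments of order `0` and `2` reduce to
the odd parts `π²/8` and `π⁴/96` of `ζ(2)` and `ζ(4)`.
-/

open Real MeasureTheory Set
open scoped Nat

theorem hasSum_one_div_odd_pow {p : ℕ} {S : ℝ}
    (h : HasSum (fun n : ℕ => 1 / (n : ℝ) ^ p) S) :
    HasSum (fun n : ℕ => 1 / (2 * n + 1 : ℝ) ^ p) ((1 - 1 / 2 ^ p) * S) := by
  have hEven : HasSum (fun n : ℕ => 1 / ((2 * n : ℕ) : ℝ) ^ p) (S / 2 ^ p) := by
    have hterm : (fun n : ℕ => 1 / ((2 * n : ℕ) : ℝ) ^ p)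
        = fun n : ℕ => 1 / (n : ℝ) ^ p / 2 ^ p := by
      funext n
      push_cast
      rw [mul_pow, div_div, mul_comm]
    rw [hterm]
    exact h.div_const _
  obtain ⟨T, hOdd⟩ : Summable (fun n : ℕ => 1 / ((2 * n + 1 : ℕ) : ℝ) ^ p) :=
    h.summable.comp_injective fun a b hab => by omega
  have hsplit := (HasSum.even_add_odd (f := fun n : ℕ => 1 / (n : ℝ) ^ p) hEven hOdd).unique h
  rw [show (1 - 1 / 2 ^ p) * S = S - S / 2 ^ p by ring, ← eq_sub_of_add_eq' hsplit]
  exact_mod_cast hOdd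

theorem hasSum_one_div_odd_pow_two :
    HasSum (fun n : ℕ => 1 / (2 * n + 1 : ℝ) ^ 2) (π ^ 2 / 8) := by
  convert hasSum_one_div_odd_pow hasSum_zeta_two using 1
  ring

theorem hasSum_one_div_odd_pow_four :
    HasSum (fun n : ℕ => 1 / (2 * n + 1 : ℝ) ^ 4) (π ^ 4 / 96) := by
  convert hasSum_one_div_odd_pow hasSum_zeta_four using 1
  ring

theorem hasSum_exp_neg_odd_mul {w : ℝ} (hw : 0 < w) :
    HasSum (fun n : ℕ => exp (-((2 * n + 1) / 2 * w))) (exp (w / 2) - exp (-(w / 2)))⁻¹ := by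
  have hr : exp (-w) < 1 := exp_lt_one_iff.mpr (neg_neg_of_pos hw)
  have hgeo := (hasSum_geometric_of_lt_one (exp_pos _).le hr).mul_left (exp (-(w / 2)))
  have hterm : (fun n : ℕ => exp (-((2 * n + 1) / 2 * w)))
      = fun n : ℕ => exp (-(w / 2)) * exp (-w) ^ n := by
    funext n
    rw [← exp_nat_mul, ← exp_add]
    ring_nf
  have hsum : exp (-(w / 2)) * (1 - exp (-w))⁻¹ = (exp (w / 2) - exp (-(w / 2)))⁻¹ := by
    have hfactor : exp (w / 2) - exp (-(w / 2)) = exp (w / 2) * (1 - exp (-w)) := by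
      rw [mul_sub, mul_one, ← exp_add]
      ring_nf
    rw [hfactor, mul_inv, ← exp_neg]
  rw [hterm, ← hsum]
  exact hgeo

theorem integral_pow_mul_exp_neg_mul_Ioi (k : ℕ) {c : ℝ} (hc : 0 < c) :
    ∫ x in Ioi (0 : ℝ), x ^ k * exp (-(c * x)) = k ! / c ^ (k + 1) := by
  have h := integral_rpow_mul_exp_neg_mul_Ioi (a := (k : ℝ) + 1) (by positivity) hc
  simp only [add_sub_cancel_right, rpow_natCast] at h
  rw [h, Gamma_nat_eq_factorial, ← Nat.cast_add_one, rpow_natCast, one_div, inv_pow]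
  ring

theorem integrableOn_pow_mul_exp_neg_mul_Ioi (k : ℕ) {c : ℝ} (hc : 0 < c) :
    IntegrableOn (fun x : ℝ => x ^ k * exp (-(c * x))) (Ioi 0) :=
  .of_integral_ne_zero (by rw [integral_pow_mul_exp_neg_mul_Ioi k hc]; positivity)

theorem integral_pow_div_exp_sub_exp_neg_Ioi (m : ℕ) {T : ℝ}
    (hT : HasSum (fun n : ℕ => 1 / (2 * n + 1 : ℝ) ^ (m + 1)) T) :
    ∫ w in Ioi (0 : ℝ), w ^ m / (exp (w / 2) - exp (-(w / 2))) = m ! * 2 ^ (m + 1) * T := by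
  have hc (n : ℕ) : (0 : ℝ) < (2 * n + 1) / 2 := by positivity
  have hF (n : ℕ) : ∫ w in Ioi (0 : ℝ), w ^ m * exp (-((2 * n + 1) / 2 * w))
      = m ! * 2 ^ (m + 1) * (1 / (2 * n + 1 : ℝ) ^ (m + 1)) := by
    rw [integral_pow_mul_exp_neg_mul_Ioi m (hc n), div_pow]
    field_simp
  have hnorm (n : ℕ) : ∫ w in Ioi (0 : ℝ), ‖w ^ m * exp (-((2 * n + 1) / 2 * w))‖
      = ∫ w in Ioi (0 : ℝ), w ^ m * exp (-((2 * n + 1) / 2 * w)) :=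
    setIntegral_congr_fun measurableSet_Ioi fun w (hw : 0 < w) =>
      norm_of_nonneg (by positivity)
  have hsum := hasSum_integral_of_summable_integral_norm
    (fun n => integrableOn_pow_mul_exp_neg_mul_Ioi m (hc n))
    (by simpa only [hnorm, hF] using (hT.mul_left ((m ! : ℝ) * 2 ^ (m + 1))).summable)
  have hpointwise : ∫ w in Ioi (0 : ℝ), ∑' n : ℕ, w ^ m * exp (-((2 * n + 1) / 2 * w))
      = ∫ w in Ioi (0 : ℝ), w ^ m / (exp (w / 2) - exp (-(w / 2))) :=
    setIntegral_congr_fun measurableSet_Ioi fun w (hw : 0 < w) =>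
      ((hasSum_exp_neg_odd_mul hw).mul_left (w ^ m)).tsum_eq
  rw [← hpointwise]
  exact hsum.unique (by simpa only [hF] using hT.mul_left ((m ! : ℝ) * 2 ^ (m + 1)))

theorem integral_eq_zero_of_odd {E : Type*} [NormedAddCommGroup E] [NormedSpace ℝ E]
    {f : ℝ → E} (hf : ∀ x, f (-x) = -f x) : ∫ x, f x = 0 := by
  have h : ∫ x, f x = -∫ x, f x := by
    rw [← integral_neg, ← integral_neg_eq_self]
    simp only [hf]
  rwa [eq_neg_iff_add_eq_zero, ← two_smul ℝ, smul_eq_zero, or_iff_right two_ne_zero] at h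

theorem logOddsRatioDensity_neg (w : ℝ) : logOddsRatioDensity (-w) = logOddsRatioDensity w := by
  unfold logOddsRatioDensity
  rcases eq_or_ne w 0 with rfl | hw
  · simp
  · rw [if_neg (neg_ne_zero.mpr hw), if_neg hw]
    simp only [neg_div, neg_neg]
    rw [← neg_sub, mul_neg, div_neg, neg_neg]

theorem pow_mul_logOddsRatioDensity_of_pos (m : ℕ) {w : ℝ} (hw : 0 < w) :
    w ^ m * logOddsRatioDensity w
      = (π ^ 2)⁻¹ * (w ^ (m + 1) / (exp (w / 2) - exp (-(w / 2)))) := by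
  rw [logOddsRatioDensity, if_neg hw.ne', pow_succ]
  simp only [div_eq_mul_inv, mul_inv]
  ring

theorem integral_pow_mul_logOddsRatioDensity_of_odd {m : ℕ} (hm : Odd m) :
    ∫ w, w ^ m * logOddsRatioDensity w = 0 :=
  integral_eq_zero_of_odd fun w => by rw [logOddsRatioDensity_neg, hm.neg_pow, neg_mul]

theorem integral_pow_mul_logOddsRatioDensity_of_even {m : ℕ} (hm : Even m) {T : ℝ}
    (hT : HasSum (fun n : ℕ => 1 / (2 * n + 1 : ℝ) ^ (m + 2)) T) :
    ∫ w, w ^ m * logOddsRatioDensity w = 2 * (m + 1)! * 2 ^ (m + 2) * T / π ^ 2 := by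
  have heven (w : ℝ) : |w| ^ m * logOddsRatioDensity |w| = w ^ m * logOddsRatioDensity w := by
    rw [hm.pow_abs]
    rcases abs_choice w with h | h <;> simp only [h, logOddsRatioDensity_neg]
  have hfold := integral_comp_abs (f := fun w => w ^ m * logOddsRatioDensity w)
  simp only [heven] at hfold
  rw [hfold, setIntegral_congr_fun measurableSet_Ioi fun w (hw : 0 < w) =>
      pow_mul_logOddsRatioDensity_of_pos m hw,
    integral_const_mul, integral_pow_div_exp_sub_exp_neg_Ioi (m + 1) hT]
  ring

/-- The Jeffreys-prior log odds ratio distribution integrates to one, has mean `0`,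
and variance `2π²`. -/
theorem log_odds_ratio_moments :
    (∫ w : ℝ, logOddsRatioDensity w = 1) ∧
    (∫ w : ℝ, w * logOddsRatioDensity w = 0) ∧
    (∫ w : ℝ, w ^ 2 * logOddsRatioDensity w = 2 * π ^ 2) := by
  have hπ : π ^ 2 ≠ 0 := by positivity
  refine ⟨?_, ?_, ?_⟩
  · have h := integral_pow_mul_logOddsRatioDensity_of_even Even.zero hasSum_one_div_odd_pow_two
    simp only [pow_zero, one_mul] at h
    rw [h]
    field_simp
    norm_num
  · simpa using integral_pow_mul_logOddsRatioDensity_of_odd odd_one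
  · rw [integral_pow_mul_logOddsRatioDensity_of_even even_two hasSum_one_div_odd_pow_four]
    field_simp
    norm_num
end
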